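/- Let d ≥ 1 and let n ∈ (0, 1), ρ^{sR} > 0, ρ^{wR} > 0, Δt > 0 be constants. Set ρ^s := (1 − n) ρ^{sR} and ρ^w := n ρ^{wR}. Let v^*_s, v^*_w, v^{t+1}_s, v^{t+1}_w : ℝ^d → ℝ^d be differentiable vector fields and let Δp : ℝ^d → ℝ be twice continuously differentiable. Assume that at every point: (i) the solid-phase pressure-correction equation ρ^s (v^{t+1}_s − v^*_s)/Δt = −(1 − n) ∇Δp holds; (ii) the water-phase pressure-correction equation ρ^w (v^{t+1}_w − v^*_w)/Δt = −n ∇Δp holds; (iii) the incompressibility condition n · div v^{t+1}_w + (1 − n) · div v^{t+1}_s = 0 holds. Then at every point, n · div v^*_w + (1 − n) · div v^*_s = Δt · ( (1 − n)/ρ^{sR} + n/ρ^{wR} ) · ∇²Δp, where ∇²Δp is the Laplacian of Δp. -/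

import Mathlib

/-! Solving each pressure-correction equation gives `v* = v^{t+1} + (Δt / ρ^{αR}) ∇Δp`, the volume
fraction cancelling against the one in the partial density. Divergence is linear, so the
incompressibility of the final velocities leaves only the Laplacian term. -/

/-- The divergence of a vector field `v : ℝ^d → ℝ^d` at `x`:
the trace of the Fréchet derivative of `v` at `x`. -/
noncomputable def vdiv {d : ℕ} (v : EuclideanSpace ℝ (Fin d) → EuclideanSpace ℝ (Fin d))
    (x : EuclideanSpace ℝ (Fin d)) : ℝ :=
  LinearMap.trace ℝ (EuclideanSpace ℝ (Fin d)) (fderiv ℝ v x).toLinearMap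

theorem ContDiff.differentiable_gradient {F : Type*} [NormedAddCommGroup F]
    [InnerProductSpace ℝ F] [CompleteSpace F] {f : F → ℝ} {k : WithTop ℕ∞}
    (hf : ContDiff ℝ k f) (hk : 2 ≤ k) :
    Differentiable ℝ (gradient f) :=
  (InnerProductSpace.toDual ℝ F).symm.differentiable.comp
    ((hf.fderiv_right (m := 1) hk).differentiable one_ne_zero)

theorem vdiv_add_smul {d : ℕ} {v w : EuclideanSpace ℝ (Fin d) → EuclideanSpace ℝ (Fin d)}
    {x : EuclideanSpace ℝ (Fin d)} (hv : DifferentiableAt ℝ v x) (hw : DifferentiableAt ℝ w x)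
    (c : ℝ) : vdiv (fun y => v y + c • w y) x = vdiv v x + c * vdiv w x := by
  rw [vdiv, fderiv_fun_add hv (hw.fun_const_smul c), fderiv_fun_const_smul hw]
  simp only [ContinuousLinearMap.toLinearMap_add, ContinuousLinearMap.toLinearMap_smul,
    map_add, map_smul, smul_eq_mul, vdiv]

theorem eq_add_smul_of_smul_sub_eq_neg_smul {𝕜 E : Type*} [Field 𝕜] [AddCommGroup E]
    [Module 𝕜 E] {φ ρ τ : 𝕜} {a b g : E} (hφ : φ ≠ 0) (hρ : ρ ≠ 0) (hτ : τ ≠ 0)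
    (h : (φ * ρ / τ) • (a - b) = -(φ • g)) : b = a + (τ / ρ) • g := by
  linear_combination (norm := skip) (-(τ / (φ * ρ))) • h
  match_scalars <;> field_simp <;> ring

theorem intermediate_mass_conservation_defect_general {d : ℕ}
    (n ρsR ρwR Δt : ℝ)
    (hn : n ∈ Set.Ioo (0 : ℝ) 1) (hρsR : 0 < ρsR) (hρwR : 0 < ρwR)
    (hΔt : 0 < Δt)
    (ρs ρw : ℝ) (hρs : ρs = (1 - n) * ρsR) (hρw : ρw = n * ρwR)
    (vss vsw vt1s vt1w : EuclideanSpace ℝ (Fin d) → EuclideanSpace ℝ (Fin d))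
    (hvt1s : Differentiable ℝ vt1s) (hvt1w : Differentiable ℝ vt1w)
    (Δp : EuclideanSpace ℝ (Fin d) → ℝ) (hΔp : ContDiff ℝ 2 Δp)
    (hsolid : ∀ x, (ρs / Δt) • (vt1s x - vss x) = -((1 - n) • gradient Δp x))
    (hwater : ∀ x, (ρw / Δt) • (vt1w x - vsw x) = -(n • gradient Δp x))
    (hincomp : ∀ x, n * vdiv vt1w x + (1 - n) * vdiv vt1s x = 0) :
    ∀ x, n * vdiv vsw x + (1 - n) * vdiv vss x
      = Δt * ((1 - n) / ρsR + n / ρwR) * vdiv (fun y => gradient Δp y) x := by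
  intro x
  obtain ⟨hn0, hn1⟩ := hn
  have hgrad : Differentiable ℝ (gradient Δp) := hΔp.differentiable_gradient le_rfl
  have hss : vss = fun y => vt1s y + (Δt / ρsR) • gradient Δp y := funext fun y =>
    eq_add_smul_of_smul_sub_eq_neg_smul (sub_ne_zero.2 hn1.ne') hρsR.ne' hΔt.ne'
      (hρs ▸ hsolid y)
  have hsw : vsw = fun y => vt1w y + (Δt / ρwR) • gradient Δp y := funext fun y =>
    eq_add_smul_of_smul_sub_eq_neg_smul hn0.ne' hρwR.ne' hΔt.ne' (hρw ▸ hwater y)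
  rw [hss, hsw, vdiv_add_smul (hvt1s x) (hgrad x), vdiv_add_smul (hvt1w x) (hgrad x)]
  linear_combination hincomp x

/-- Mass-conservation defect of the intermediate velocities in Chorin's
projection method for the two-phase MPM: from the solid- and water-phase
pressure-correction equations and incompressibility of the final velocities,
`n ∇·v*_w + (1−n) ∇·v*_s = Δt ( (1−n)/ρ^{sR} + n/ρ^{wR} ) ∇²Δp` everywhere,
where `∇²Δp = ∇·(∇Δp)` is the Laplacian of the pressure increment. -/
theorem intermediate_mass_conservation_defect {d : ℕ} (hd : 1 ≤ d)
    (n ρsR ρwR Δt : ℝ)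
    (hn : n ∈ Set.Ioo (0 : ℝ) 1) (hρsR : 0 < ρsR) (hρwR : 0 < ρwR)
    (hΔt : 0 < Δt)
    (ρs ρw : ℝ) (hρs : ρs = (1 - n) * ρsR) (hρw : ρw = n * ρwR)
    (vss vsw vt1s vt1w : EuclideanSpace ℝ (Fin d) → EuclideanSpace ℝ (Fin d))
    (hvss : Differentiable ℝ vss) (hvsw : Differentiable ℝ vsw)
    (hvt1s : Differentiable ℝ vt1s) (hvt1w : Differentiable ℝ vt1w)
    (Δp : EuclideanSpace ℝ (Fin d) → ℝ) (hΔp : ContDiff ℝ 2 Δp)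
    (hsolid : ∀ x, (ρs / Δt) • (vt1s x - vss x) = -((1 - n) • gradient Δp x))
    (hwater : ∀ x, (ρw / Δt) • (vt1w x - vsw x) = -(n • gradient Δp x))
    (hincomp : ∀ x, n * vdiv vt1w x + (1 - n) * vdiv vt1s x = 0) :
    ∀ x, n * vdiv vsw x + (1 - n) * vdiv vss x
      = Δt * ((1 - n) / ρsR + n / ρwR) * vdiv (fun y => gradient Δp y) x :=
  intermediate_mass_conservation_defect_general n ρsR ρwR Δt hn hρsR hρwR hΔt ρs ρw hρs hρw vss vsw
    vt1s vt1w hvt1s hvt1w Δp hΔp hsolid hwater hincomp
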